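/- arXiv:1405.5441 — 7 statements merged into one kernel-verified Lean document; each statement's English description precedes it below -/
import Mathlib

section
/- For every real number τ ≥ π there exists v ∈ (−π/2, π/2) such that F(τ, v, u₁) = F(τ, v, u₂) for all real u₁, u₂ (i.e. the value of F(τ, v, u) does not depend on u, so the parametrized geodesic sphere of radius τ self-intersects). Consequently, a geodesic sphere of radius ρ in S²×R is a simply parametrized surface only if ρ < π. -/
/-!
The longitude enters `F τ v u` only through the factor `sin (τ * cos v)`. For `τ ≥ π` the
altitude `v = arccos (π / τ)` lies in `[0, π/2)` and gives `τ * cos v = π`, so the whole circle of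
longitudes at that altitude collapses to a single point.
-/

open Real Set

/-- The parametrization of the geodesic sphere of radius `τ` centred at `(1,0,0)` in the
projective model of `S²×R` geometry: `F τ v u` is the point at geodesic distance `τ`
along the geodesic with altitude `v` and longitude `u`. -/
noncomputable def F (τ v u : ℝ) : ℝ × ℝ × ℝ :=
  (Real.exp (τ * Real.sin v) * Real.cos (τ * Real.cos v),
   Real.exp (τ * Real.sin v) * Real.sin (τ * Real.cos v) * Real.cos u,
   Real.exp (τ * Real.sin v) * Real.sin (τ * Real.cos v) * Real.sin u)

theorem F_eq_of_sin_mul_cos_eq_zero {τ v : ℝ} (h : sin (τ * cos v) = 0) (u₁ u₂ : ℝ) :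
    F τ v u₁ = F τ v u₂ := by
  simp only [F, h, mul_zero, zero_mul]

theorem exists_mem_Ioo_mul_cos_eq {a τ : ℝ} (ha : 0 < a) (haτ : a ≤ τ) :
    ∃ v ∈ Ioo (-(π / 2)) (π / 2), τ * cos v = a := by
  have hτ : 0 < τ := ha.trans_le haτ
  have hdiv : a / τ ≤ 1 := (div_le_one hτ).2 haτ
  refine ⟨arccos (a / τ), ⟨?_, arccos_lt_pi_div_two.2 (div_pos ha hτ)⟩, ?_⟩
  · linarith [arccos_nonneg (a / τ), pi_pos]
  · rw [cos_arccos (by linarith [div_pos ha hτ]) hdiv]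
    field_simp

/-- For every radius `τ ≥ π` there is an altitude `v ∈ (−π/2, π/2)` at which the value of
`F τ v u` does not depend on the longitude `u`; i.e. the parametrized geodesic sphere of
radius `τ` self-intersects. Hence a geodesic sphere of radius `ρ` in `S²×R` is a simply
parametrized surface only if `ρ < π`. -/
theorem geodesic_sphere_selfintersects_of_pi_le_radius :
    ∀ τ : ℝ, π ≤ τ → ∃ v ∈ Ioo (-(π/2)) (π/2), ∀ u₁ u₂ : ℝ, F τ v u₁ = F τ v u₂ := by
  intro τ hτ
  obtain ⟨v, hv, hcos⟩ := exists_mem_Ioo_mul_cos_eq pi_pos hτ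
  exact ⟨v, hv, F_eq_of_sin_mul_cos_eq_zero (by rw [hcos, sin_pi])⟩
end

section
/- For every fixed ρ with 0 < ρ < π, the map (v, u) ↦ F(ρ, v, u) is injective on (−π/2, π/2) × (−π, π]. (This is the non-self-intersection half of the statement that a geodesic sphere of radius ρ exists in S²×R if and only if ρ ∈ [0, π).) -/
/-!
Writing `w = exp (ρ sin v + i ρ cos v)`, the point `F ρ v u` is `(Re w, Im w · (cos u, sin u))`.
For `ρ < π` and `|v| < π/2` we have `0 < ρ cos v < π`, so `Im w > 0`: polar coordinates on the
last two components recover `Im w` and `u`, then polar coordinates of `w` recover its modulus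
`exp (ρ sin v)`, hence `sin v`, hence `v`.
-/

open Real Set

theorem polarCoord_symm_injOn_Ioc : InjOn polarCoord.symm (Ioi 0 ×ˢ Ioc (-π) π) := by
  rintro ⟨r, θ⟩ ⟨hr : 0 < r, hθ : θ ∈ Ioc (-π) π⟩ ⟨r', θ'⟩ ⟨hr' : 0 < r', hθ' : θ' ∈ Ioc (-π) π⟩ h
  simp only [polarCoord_symm_apply, Prod.mk.injEq] at h
  have hz : (r : ℂ) * (Complex.cos θ + Complex.sin θ * Complex.I)
      = r' * (Complex.cos θ' + Complex.sin θ' * Complex.I) := by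
    apply Complex.ext <;> simp [← Complex.ofReal_cos, ← Complex.ofReal_sin, h.1, h.2]
  have hnorm : ∀ {s : ℝ} (φ : ℝ), 0 < s →
      ‖(s : ℂ) * (Complex.cos φ + Complex.sin φ * Complex.I)‖ = s := fun φ hs => by
    rw [norm_mul, Complex.norm_cos_add_sin_mul_I, mul_one, Complex.norm_real, norm_of_nonneg hs.le]
  exact Prod.ext (by rw [← hnorm θ hr, hz, hnorm θ' hr'])
    (by rw [← Complex.arg_mul_cos_add_sin_mul_I hr hθ, hz,
      Complex.arg_mul_cos_add_sin_mul_I hr' hθ'])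

theorem mul_cos_mem_Ioo_zero_pi {ρ v : ℝ} (hρ : 0 < ρ) (hρπ : ρ < π)
    (hv : v ∈ Ioo (-(π / 2)) (π / 2)) : ρ * cos v ∈ Ioo 0 π :=
  ⟨mul_pos hρ (cos_pos_of_mem_Ioo hv),
    (mul_le_of_le_one_right hρ.le (cos_le_one v)).trans_lt hρπ⟩

theorem F_eq_polarCoord_symm (τ v u : ℝ) :
    F τ v u = let w := polarCoord.symm (exp (τ * sin v), τ * cos v)
      (w.1, polarCoord.symm (w.2, u)) := by
  simp only [F, polarCoord_symm_apply]

/-- For every fixed `ρ` with `0 < ρ < π`, the map `(v, u) ↦ F ρ v u` is injective on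
`(−π/2, π/2) × (−π, π]`: the geodesic sphere of radius `ρ < π` does not self-intersect. -/
theorem geodesic_sphere_injective_of_radius_lt_pi :
    ∀ ρ : ℝ, 0 < ρ → ρ < π →
      Set.InjOn (fun p : ℝ × ℝ => F ρ p.1 p.2) (Ioo (-(π/2)) (π/2) ×ˢ Ioc (-π) π) := by
  rintro ρ hρ hρπ ⟨v, u⟩ ⟨hv : v ∈ Ioo _ _, hu : u ∈ Ioc _ _⟩
    ⟨v', u'⟩ ⟨hv' : v' ∈ Ioo _ _, hu' : u' ∈ Ioc _ _⟩ hF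
  simp only [F_eq_polarCoord_symm, Prod.mk.injEq] at hF
  have hθ := mul_cos_mem_Ioo_zero_pi hρ hρπ hv
  have hθ' := mul_cos_mem_Ioo_zero_pi hρ hρπ hv'
  have hIm_pos : ∀ {w : ℝ}, ρ * cos w ∈ Ioo 0 π →
      0 < (polarCoord.symm (exp (ρ * sin w), ρ * cos w)).2 := fun h => by
    rw [polarCoord_symm_apply]
    exact mul_pos (exp_pos _) (sin_pos_of_mem_Ioo h)
  obtain ⟨hIm, rfl⟩ := Prod.ext_iff.1 <| polarCoord_symm_injOn_Ioc
    (mk_mem_prod (hIm_pos hθ) hu) (mk_mem_prod (hIm_pos hθ') hu') hF.2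
  have hsub : Ioo 0 π ⊆ Ioc (-π) π :=
    Ioo_subset_Ioc_self.trans (Ioc_subset_Ioc_left (neg_nonpos.2 pi_pos.le))
  have hmod := congrArg Prod.fst <| polarCoord_symm_injOn_Ioc
    (mk_mem_prod (exp_pos _) (hsub hθ)) (mk_mem_prod (exp_pos _) (hsub hθ')) (Prod.ext hF.1 hIm)
  have hsin : sin v = sin v' := mul_left_cancel₀ hρ.ne' (exp_injective hmod)
  rw [injOn_sin (Ioo_subset_Icc_self hv) (Ioo_subset_Icc_self hv') hsin]
end

section
/- Let D be a Borel subset of the unit sphere S² ⊂ ℝ³ with spherical surface measure σ(D), and let 0 < α ≤ β be real numbers. Then the integral of (x² + y² + z²)^{−3/2} over the cone region C = { r·P : P ∈ D, r ∈ [α, β] } with respect to Lebesgue measure on ℝ³ equals σ(D) · log(β/α). (In the projective model of S²×R, C is a prism over base D with height h = log(β/α), so the volume of a prism equals the area of its base times its height.) -/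
open Real Set MeasureTheory Metric

/-! In polar coordinates `x = r • P`, Lebesgue measure on `E \ {0}` is the product of the
sphere measure `σ` with the radial measure `r ^ (n - 1) dr`. The cone over `D` with radii in
`S` is a product set in these coordinates, so the integral of a radial function over it is
`σ(D)` times a one-dimensional integral. In `ℝ³` the radial integrand is
`r ^ 2 * (r ^ 2) ^ (-3/2) = r⁻¹`, whose integral over `[α, β]` is `log (β / α)`. -/

namespace MeasureTheory

variable {E F : Type*} [NormedAddCommGroup E] [NormedSpace ℝ E]
  [NormedAddCommGroup F] [NormedSpace ℝ F]

def unitSphereSMul (p : sphere (0 : E) 1 × Ioi (0 : ℝ)) : E := (p.2 : ℝ) • (p.1 : E)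

theorem norm_unitSphereSMul (p : sphere (0 : E) 1 × Ioi (0 : ℝ)) :
    ‖unitSphereSMul p‖ = p.2 := by
  simp [unitSphereSMul, norm_smul, abs_of_pos p.2.2.out]

theorem image_unitSphereSMul_prod (D : Set (sphere (0 : E) 1)) {S : Set ℝ} (hS : S ⊆ Ioi 0) :
    unitSphereSMul '' (D ×ˢ (Subtype.val ⁻¹' S)) =
      {x : E | ∃ P ∈ D, ∃ r ∈ S, x = r • (P : E)} := by
  ext x
  constructor
  · rintro ⟨⟨P, r⟩, ⟨hP, hr⟩, rfl⟩
    exact ⟨P, hP, r, hr, rfl⟩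
  · rintro ⟨P, hP, r, hr, rfl⟩
    exact ⟨(P, ⟨r, hS hr⟩), ⟨hP, hr⟩, rfl⟩

variable [FiniteDimensional ℝ E] [MeasurableSpace E] [BorelSpace E]

theorem measurableEmbedding_unitSphereSMul :
    MeasurableEmbedding (unitSphereSMul : sphere (0 : E) 1 × Ioi (0 : ℝ) → E) :=
  (MeasurableEmbedding.subtype_coe (measurableSet_singleton 0).compl).comp
    (homeomorphUnitSphereProd E).symm.measurableEmbedding

theorem measurePreserving_unitSphereSMul [Nontrivial E] (μ : Measure E) [μ.IsAddHaarMeasure] :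
    MeasurePreserving unitSphereSMul
      (μ.toSphere.prod (Measure.volumeIoiPow (Module.finrank ℝ E - 1))) μ := by
  have hval : MeasurePreserving (Subtype.val : ({0}ᶜ : Set E) → E) (μ.comap Subtype.val) μ :=
    ⟨measurable_subtype_coe, by
      rw [map_comap_subtype_coe (measurableSet_singleton 0).compl, restrict_compl_singleton]⟩
  exact hval.comp <| μ.measurePreserving_homeomorphUnitSphereProd.symm
    (homeomorphUnitSphereProd E).toMeasurableEquiv

theorem setIntegral_volumeIoiPow (n : ℕ) {S : Set ℝ} (hS : MeasurableSet S) (hS0 : S ⊆ Ioi 0)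
    (f : ℝ → F) :
    ∫ r in Subtype.val ⁻¹' S, f r ∂Measure.volumeIoiPow n = ∫ r in S, r ^ n • f r := by
  have hmeas : MeasurableSet (Subtype.val ⁻¹' S : Set (Ioi (0 : ℝ))) :=
    hS.preimage measurable_subtype_coe
  simp only [Measure.volumeIoiPow, ENNReal.ofReal]
  rw [restrict_withDensity hmeas, integral_withDensity_eq_integral_smul
      ((measurable_subtype_coe.pow_const _).real_toNNReal),
    (MeasurableEmbedding.subtype_coe measurableSet_Ioi).restrict_comap, Subtype.image_preimage_coe,
    inter_eq_self_of_subset_right hS0,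
    integral_subtype_comap measurableSet_Ioi fun r ↦ (r ^ n).toNNReal • f r,
    Measure.restrict_restrict measurableSet_Ioi, inter_eq_self_of_subset_right hS0]
  refine setIntegral_congr_fun hS fun r hr ↦ ?_
  rw [NNReal.smul_def, Real.coe_toNNReal _ (pow_nonneg (hS0 hr).out.le _)]

theorem setIntegral_cone_fun_norm [Nontrivial E] (μ : Measure E) [μ.IsAddHaarMeasure]
    (D : Set (sphere (0 : E) 1)) {S : Set ℝ} (hS : MeasurableSet S)
    (hS0 : S ⊆ Ioi 0) (f : ℝ → F) :
    ∫ x in {x : E | ∃ P ∈ D, ∃ r ∈ S, x = r • (P : E)}, f ‖x‖ ∂μ =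
      μ.toSphere.real D • ∫ r in S, r ^ (Module.finrank ℝ E - 1) • f r := by
  rw [← image_unitSphereSMul_prod D hS0,
    (measurePreserving_unitSphereSMul μ).setIntegral_image_emb
      measurableEmbedding_unitSphereSMul,
    ← Measure.prod_restrict]
  simp only [norm_unitSphereSMul]
  rw [integral_fun_snd (fun r : Ioi (0 : ℝ) ↦ f r), measureReal_restrict_apply_univ,
    setIntegral_volumeIoiPow _ hS hS0]

end MeasureTheory

theorem setIntegral_Icc_inv {α β : ℝ} (hα : 0 < α) (hαβ : α ≤ β) :
    ∫ r in Icc α β, r⁻¹ = Real.log (β / α) := by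
  rw [integral_Icc_eq_integral_Ioc, ← intervalIntegral.integral_of_le hαβ,
    integral_inv (by rw [uIcc_of_le hαβ]; exact fun h0 ↦ hα.not_ge h0.1)]

theorem sq_mul_rpow_sq_neg_three_halves {r : ℝ} (hr : 0 < r) :
    r ^ 2 * (r ^ 2) ^ (-(3 : ℝ) / 2) = r⁻¹ := by
  rw [← Real.rpow_natCast r 2, ← Real.rpow_mul hr.le, ← Real.rpow_add hr]
  norm_num [Real.rpow_neg_one]

theorem prism_volume_eq_base_area_mul_height_general
    (D : Set (sphere (0 : EuclideanSpace ℝ (Fin 3)) 1))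
    (α β : ℝ) (hα : 0 < α) (hαβ : α ≤ β) :
    (∫ x in {x : EuclideanSpace ℝ (Fin 3) |
        ∃ P ∈ D, ∃ r ∈ Icc α β, x = r • (P : EuclideanSpace ℝ (Fin 3))},
      (‖x‖ ^ 2) ^ (-(3 : ℝ) / 2)) =
    ((volume : Measure (EuclideanSpace ℝ (Fin 3))).toSphere D).toReal * Real.log (β / α) := by
  have hpos : Icc α β ⊆ Ioi 0 := fun r hr ↦ hα.trans_le hr.1
  rw [setIntegral_cone_fun_norm volume D measurableSet_Icc hpos
      fun r ↦ (r ^ 2) ^ (-(3 : ℝ) / 2),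
    finrank_euclideanSpace_fin, ← setIntegral_Icc_inv hα hαβ, smul_eq_mul]
  congr 1
  exact setIntegral_congr_fun measurableSet_Icc fun r hr ↦
    sq_mul_rpow_sq_neg_three_halves (hpos hr)

/-- Volume of a prism in the projective model of `S²×R`: for a Borel set `D` of the unit
sphere `S² ⊂ ℝ³` with spherical surface measure `σ D`, and `0 < α ≤ β`, the integral of
`(x² + y² + z²)^{-3/2}` over the cone region `{ r·P : P ∈ D, r ∈ [α, β] }` equals
`σ(D) · log(β/α)`, i.e. the area of the base times the height `h = log(β/α)`. -/
theorem prism_volume_eq_base_area_mul_height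
    (D : Set (sphere (0 : EuclideanSpace ℝ (Fin 3)) 1)) (hD : MeasurableSet D)
    (α β : ℝ) (hα : 0 < α) (hαβ : α ≤ β) :
    (∫ x in {x : EuclideanSpace ℝ (Fin 3) |
        ∃ P ∈ D, ∃ r ∈ Icc α β, x = r • (P : EuclideanSpace ℝ (Fin 3))},
      (‖x‖ ^ 2) ^ (-(3 : ℝ) / 2)) =
    ((volume : Measure (EuclideanSpace ℝ (Fin 3))).toSphere D).toReal * Real.log (β / α) :=
  prism_volume_eq_base_area_mul_height_general D α β hα hαβ
end

section
/- The sequence of optimal packing densities of the S²×R space groups 1q.I.1, given by δ_q = V(π/q) · q² / (8π²) for integers q ≥ 3, is strictly decreasing in q: for all integers 3 ≤ q < q' one has δ_{q'} < δ_q. (Here the optimal ball radius is R = π/q and the Dirichlet–Voronoi cell is a prism over a spherical digon of angle 2π/q, with base area 4π/q and height 2π/q, hence volume 8π²/q².) -/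
open Real

/-- `V ρ` is the volume of the geodesic ball of radius `ρ` in `S²×R` geometry
(valid for `ρ ∈ [0, π)`). -/
noncomputable def V (ρ : ℝ) : ℝ :=
  2 * π * ∫ τ in (0 : ℝ)..ρ, ∫ v in (-(π/2))..(π/2), τ * Real.sin (τ * Real.cos v)

/-!
Substituting `τ = ρ s` gives `V ρ = 2π ρ² F ρ` with `F ρ = ∫₀¹ s ∫ sin (ρ s cos v) dv ds`,
so `δ_q = (π / 4) F (π / q)`. For `0 ≤ x ≤ y ≤ π/2` and `cos v ∈ [0, 1]` the arguments
`x cos v ≤ y cos v` stay in `[0, π/2]`, where `sin` is increasing; hence `F` is strictly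
increasing on `[0, π/2]`, and `π / q` decreases in `q`.
-/

open Set

noncomputable def sinCosIntegral (t : ℝ) : ℝ := ∫ v in (-(π/2))..(π/2), sin (t * cos v)

noncomputable def ballProfile (ρ : ℝ) : ℝ := ∫ s in (0:ℝ)..1, s * sinCosIntegral (ρ * s)

@[fun_prop]
theorem continuous_sinCosIntegral : Continuous sinCosIntegral :=
  intervalIntegral.continuous_parametric_intervalIntegral_of_continuous'
    (by fun_prop : Continuous fun p : ℝ × ℝ => sin (p.1 * cos p.2)) _ _

theorem strictMonoOn_sinCosIntegral : StrictMonoOn sinCosIntegral (Icc 0 (π/2)) := by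
  rintro x ⟨hx, -⟩ y ⟨-, hy⟩ hxy
  have hpi : 0 < π / 2 := by positivity
  refine intervalIntegral.integral_lt_integral_of_continuousOn_of_le_of_exists_lt
    (by linarith) (by fun_prop) (by fun_prop) ?_ ⟨0, ⟨by linarith, by linarith⟩, ?_⟩
  · intro v hv
    have hc : 0 ≤ cos v := cos_nonneg_of_mem_Icc ⟨hv.1.le, hv.2⟩
    have hc1 : cos v ≤ 1 := cos_le_one v
    exact sin_le_sin_of_le_of_le_pi_div_two (by nlinarith) (by nlinarith) (by nlinarith)
  · simpa using sin_lt_sin_of_lt_of_le_pi_div_two (by linarith) hy hxy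

theorem strictMonoOn_ballProfile : StrictMonoOn ballProfile (Icc 0 (π/2)) := by
  rintro a ⟨ha, -⟩ b ⟨-, hb⟩ hab
  have hI : ∀ s ∈ Icc (0:ℝ) 1, sinCosIntegral (a * s) ≤ sinCosIntegral (b * s) := by
    rintro s ⟨hs0, hs1⟩
    exact strictMonoOn_sinCosIntegral.monotoneOn ⟨by positivity, by nlinarith⟩
      ⟨by nlinarith, by nlinarith⟩ (by nlinarith)
  refine intervalIntegral.integral_lt_integral_of_continuousOn_of_le_of_exists_lt
    one_pos (by fun_prop) (by fun_prop) ?_ ⟨1, ⟨zero_le_one, le_rfl⟩, ?_⟩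
  · exact fun s hs => mul_le_mul_of_nonneg_left (hI s (Ioc_subset_Icc_self hs)) hs.1.le
  · simpa using strictMonoOn_sinCosIntegral ⟨ha, by linarith⟩ ⟨by linarith, hb⟩ hab

theorem V_eq_mul_ballProfile (ρ : ℝ) : V ρ = 2 * π * ρ ^ 2 * ballProfile ρ := by
  rcases eq_or_ne ρ 0 with rfl | hρ
  · simp [V]
  have hτ : ∀ τ : ℝ, (∫ v in (-(π/2))..(π/2), τ * sin (τ * cos v)) = τ * sinCosIntegral τ :=
    fun τ => intervalIntegral.integral_const_mul τ _
  have hsubst : (∫ τ in (0:ℝ)..ρ, τ * sinCosIntegral τ) = ρ ^ 2 * ballProfile ρ := by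
    have := intervalIntegral.smul_integral_comp_mul_left (fun τ => τ * sinCosIntegral τ) ρ
      (a := 0) (b := 1)
    rw [mul_zero, mul_one] at this
    rw [← this, ballProfile, smul_eq_mul, ← intervalIntegral.integral_const_mul,
      ← intervalIntegral.integral_const_mul]
    congr 1; ext s; ring
  simp only [V, hτ, hsubst]
  ring

theorem V_pi_div_mul_sq (x : ℝ) (hx : x ≠ 0) :
    V (π / x) * x ^ 2 / (8 * π ^ 2) = π / 4 * ballProfile (π / x) := by
  rw [V_eq_mul_ballProfile]
  field_simp
  ring

/-- The optimal packing density `δ_q = V(π/q)·q²/(8π²)` of the `S²×R` space group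
`1q.I.1` (ball radius `π/q`, Dirichlet–Voronoi prism of volume `8π²/q²`) is strictly
decreasing in the rotation order `q ≥ 3`. -/
theorem density_1qI1_strictly_decreasing :
    ∀ q q' : ℕ, 3 ≤ q → q < q' →
      V (π / q') * (q' : ℝ) ^ 2 / (8 * π ^ 2) < V (π / q) * (q : ℝ) ^ 2 / (8 * π ^ 2) := by
  intro q q' hq hqq'
  have hq0 : (0:ℝ) < q := by exact_mod_cast (by omega : 0 < q)
  have hqq : (q:ℝ) < q' := by exact_mod_cast hqq'
  have hq2 : (2:ℝ) ≤ q := by exact_mod_cast (by omega : 2 ≤ q)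
  have hrad : π / q' < π / q := div_lt_div_of_pos_left pi_pos hq0 hqq
  have hq_le : π / q ≤ π / 2 := div_le_div_of_nonneg_left pi_pos.le two_pos hq2
  rw [V_pi_div_mul_sq _ hq0.ne', V_pi_div_mul_sq _ (hq0.trans hqq).ne']
  refine mul_lt_mul_of_pos_left ?_ (by positivity)
  exact strictMonoOn_ballProfile ⟨by positivity, hrad.le.trans hq_le⟩ ⟨by positivity, hq_le⟩ hrad
end

section
/- The optimal packing density for the S²×R space group 1q.I.1 with q = 3 satisfies 0.509 < V(π/3) · 9 / (8π²) < 0.510 (the paper's value is δ^{opt}(1q.I.1) ≈ 0.50946, attained at q = 3). -/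
open Real

/-!
The Taylor polynomials of `sin` alternate around it on `[0, ∞)`: integrating the bound for
`cos` with `n` terms gives the one for `sin`, and conversely, so
`sinTaylor (2m+2) ≤ sin ≤ sinTaylor (2m+1)`. After the shift `v = x - π/2` the inner integral of
`V` runs over `sin` on `[0, π]`, so integrating a Taylor polynomial termwise only needs Wallis'
integrals `∫₀^π sin^(2k+1)`. At radius `π/3` the density becomes a polynomial in `π²`, and the
bounds with three and four terms already pin it in `(0.50945, 0.50949)`.
-/

open Finset intervalIntegral Nat

noncomputable def sinTaylor (n : ℕ) (x : ℝ) : ℝ :=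
  ∑ k ∈ range n, (-1) ^ k * x ^ (2 * k + 1) / (2 * k + 1)!

noncomputable def cosTaylor (n : ℕ) (x : ℝ) : ℝ :=
  ∑ k ∈ range n, (-1) ^ k * x ^ (2 * k) / (2 * k)!

lemma continuous_sinTaylor (n : ℕ) : Continuous (sinTaylor n) := by
  unfold sinTaylor
  fun_prop

lemma cosTaylor_succ_zero (n : ℕ) : cosTaylor (n + 1) 0 = 1 := by
  simp [cosTaylor, sum_range_succ']

lemma hasDerivAt_sinTaylor (n : ℕ) (x : ℝ) : HasDerivAt (sinTaylor n) (cosTaylor n x) x := by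
  refine HasDerivAt.fun_sum fun k _ =>
    (((hasDerivAt_pow _ x).const_mul _).div_const _).congr_deriv ?_
  rw [factorial_succ]
  push_cast
  field_simp

lemma hasDerivAt_cosTaylor_succ (n : ℕ) (x : ℝ) :
    HasDerivAt (cosTaylor (n + 1)) (-sinTaylor n x) x := by
  have hterm (k : ℕ) :
      HasDerivAt (fun y : ℝ => (-1) ^ (k + 1) * y ^ (2 * (k + 1)) / (2 * (k + 1))!)
        (-((-1) ^ k * x ^ (2 * k + 1) / (2 * k + 1)!)) x := by
    refine (((hasDerivAt_pow _ x).const_mul _).div_const _).congr_deriv ?_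
    rw [show 2 * (k + 1) = 2 * k + 1 + 1 by ring, factorial_succ]
    push_cast
    field_simp
    ring
  have h := (HasDerivAt.fun_sum (u := range n) fun k _ => hterm k).add_const 1
  unfold cosTaylor sinTaylor
  simp only [sum_range_succ', sum_neg_distrib] at h ⊢
  simpa only [pow_zero, mul_zero, mul_one, factorial_zero, cast_one, div_one,
    hasDerivAt_add_const_iff] using h

lemma zero_le_of_hasDerivAt_nonneg {f f' : ℝ → ℝ} (hf : ∀ x, HasDerivAt f (f' x) x)
    (hf₀ : f 0 = 0) (hf' : ∀ x, 0 ≤ x → 0 ≤ f' x) {x : ℝ} (hx : 0 ≤ x) : 0 ≤ f x :=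
  hf₀ ▸ monotoneOn_of_hasDerivWithinAt_nonneg (convex_Ici 0)
    (fun y _ => (hf y).continuousAt.continuousWithinAt) (fun y _ => (hf y).hasDerivWithinAt)
    (fun y hy => hf' y (interior_subset hy)) Set.self_mem_Ici hx hx

lemma sin_sub_sinTaylor_alternating_of_cos {n : ℕ}
    (hcos : ∀ x, 0 ≤ x → 0 ≤ (-1) ^ n * (cos x - cosTaylor n x)) (x : ℝ) (hx : 0 ≤ x) :
    0 ≤ (-1) ^ n * (sin x - sinTaylor n x) :=
  zero_le_of_hasDerivAt_nonneg
    (fun y => (((hasDerivAt_sin y).sub (hasDerivAt_sinTaylor n y)).const_mul _))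
    (by simp [sinTaylor]) hcos hx

lemma cos_sub_cosTaylor_alternating_of_sin {n : ℕ}
    (hsin : ∀ x, 0 ≤ x → 0 ≤ (-1) ^ n * (sin x - sinTaylor n x)) (x : ℝ) (hx : 0 ≤ x) :
    0 ≤ (-1) ^ (n + 1) * (cos x - cosTaylor (n + 1) x) :=
  zero_le_of_hasDerivAt_nonneg
    (fun y => ((((hasDerivAt_cos y).sub (hasDerivAt_cosTaylor_succ n y)).const_mul _).congr_deriv
      (by ring)))
    (by simp [cosTaylor_succ_zero]) hsin hx

lemma cos_sub_cosTaylor_alternating (n : ℕ) (x : ℝ) (hx : 0 ≤ x) :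
    0 ≤ (-1) ^ (n + 1) * (cos x - cosTaylor (n + 1) x) := by
  induction n generalizing x with
  | zero => simpa [cosTaylor] using cos_le_one x
  | succ n ih =>
    exact cos_sub_cosTaylor_alternating_of_sin (sin_sub_sinTaylor_alternating_of_cos ih) x hx

lemma sinTaylor_two_mul_add_two_le_sin (m : ℕ) {x : ℝ} (hx : 0 ≤ x) :
    sinTaylor (2 * m + 2) x ≤ sin x := by
  have h := sin_sub_sinTaylor_alternating_of_cos (cos_sub_cosTaylor_alternating (2 * m + 1)) x hx
  rw [Even.neg_one_pow ⟨m + 1, by ring⟩] at h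
  linarith

lemma sin_le_sinTaylor_two_mul_add_one (m : ℕ) {x : ℝ} (hx : 0 ≤ x) :
    sin x ≤ sinTaylor (2 * m + 1) x := by
  have h := sin_sub_sinTaylor_alternating_of_cos (cos_sub_cosTaylor_alternating (2 * m)) x hx
  rw [Odd.neg_one_pow ⟨m, rfl⟩] at h
  linarith

noncomputable def ballIntegral (f : ℝ → ℝ) (r : ℝ) : ℝ :=
  2 * π * ∫ τ in (0 : ℝ)..r, ∫ x in (0 : ℝ)..π, τ * f (τ * sin x)

lemma V_eq_ballIntegral_sin (r : ℝ) : V r = ballIntegral sin r := by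
  have hshift (τ : ℝ) : ∫ v in -(π / 2)..π / 2, τ * sin (τ * cos v) =
      ∫ x in (0 : ℝ)..π, τ * sin (τ * sin x) := by
    have h := integral_comp_sub_right (fun v => τ * sin (τ * cos v)) (π / 2) (a := 0) (b := π)
    simp only [cos_sub_pi_div_two] at h
    rw [h, zero_sub, sub_half]
  simp only [V, ballIntegral, hshift]

lemma continuous_integral_mul_comp_mul_sin {f : ℝ → ℝ} (hf : Continuous f) :
    Continuous fun τ => ∫ x in (0 : ℝ)..π, τ * f (τ * sin x) :=
  continuous_parametric_intervalIntegral_of_continuous' (by fun_prop) _ _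

lemma ballIntegral_mono {f g : ℝ → ℝ} (hf : Continuous f) (hg : Continuous g)
    (hfg : ∀ x, 0 ≤ x → f x ≤ g x) {r : ℝ} (hr : 0 ≤ r) :
    ballIntegral f r ≤ ballIntegral g r := by
  refine mul_le_mul_of_nonneg_left (integral_mono_on hr
    ((continuous_integral_mul_comp_mul_sin hf).intervalIntegrable _ _)
    ((continuous_integral_mul_comp_mul_sin hg).intervalIntegrable _ _) fun τ hτ => ?_)
    (by positivity)
  refine integral_mono_on pi_pos.le (Continuous.intervalIntegrable (by fun_prop) _ _)
    (Continuous.intervalIntegrable (by fun_prop) _ _) fun x hx => ?_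
  exact mul_le_mul_of_nonneg_left
    (hfg _ (mul_nonneg hτ.1 (sin_nonneg_of_nonneg_of_le_pi hx.1 hx.2))) hτ.1

lemma integral_mul_sinTaylor_comp_mul_sin (n : ℕ) (τ : ℝ) :
    ∫ x in (0 : ℝ)..π, τ * sinTaylor n (τ * sin x) =
      ∑ k ∈ range n, (-1) ^ k / (2 * k + 1)! * (∫ x in (0 : ℝ)..π, sin x ^ (2 * k + 1)) *
        τ ^ (2 * k + 2) := by
  simp only [sinTaylor, mul_sum]
  rw [integral_finsetSum fun k _ => Continuous.intervalIntegrable (by fun_prop) _ _]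
  refine sum_congr rfl fun k _ => ?_
  rw [← integral_const_mul, ← integral_mul_const]
  exact integral_congr fun x _ => by ring

lemma ballIntegral_sinTaylor (n : ℕ) (r : ℝ) :
    ballIntegral (sinTaylor n) r = 2 * π * ∑ k ∈ range n,
      (-1) ^ k / (2 * k + 1)! * (2 * ∏ i ∈ range k, (2 * (i : ℝ) + 2) / (2 * i + 3)) *
        (r ^ (2 * k + 3) / (2 * k + 3)) := by
  simp only [ballIntegral, integral_mul_sinTaylor_comp_mul_sin]
  rw [integral_finsetSum fun k _ => Continuous.intervalIntegrable (by fun_prop) _ _]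
  congr 1
  refine sum_congr rfl fun k _ => ?_
  rw [integral_const_mul, integral_pow, integral_sin_pow_odd]
  push_cast
  ring

lemma V_le_ballIntegral_sinTaylor (m : ℕ) {r : ℝ} (hr : 0 ≤ r) :
    V r ≤ ballIntegral (sinTaylor (2 * m + 1)) r :=
  V_eq_ballIntegral_sin r ▸ ballIntegral_mono continuous_sin (continuous_sinTaylor _)
    (fun _ hx => sin_le_sinTaylor_two_mul_add_one m hx) hr

lemma ballIntegral_sinTaylor_le_V (m : ℕ) {r : ℝ} (hr : 0 ≤ r) :
    ballIntegral (sinTaylor (2 * m + 2)) r ≤ V r :=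
  V_eq_ballIntegral_sin r ▸ ballIntegral_mono (continuous_sinTaylor _) continuous_sin
    (fun _ hx => sinTaylor_two_mul_add_two_le_sin m hx) hr

lemma ballIntegral_sinTaylor_three_pi_div_three :
    ballIntegral (sinTaylor 3) (π / 3) * 9 / (8 * π ^ 2) =
      π ^ 2 / 18 - π ^ 4 / 2430 + π ^ 6 / 765450 := by
  rw [ballIntegral_sinTaylor]
  simp only [sum_range_succ, prod_range_succ, range_zero, sum_empty, prod_empty, factorial]
  field_simp
  ring

lemma ballIntegral_sinTaylor_four_pi_div_three :
    ballIntegral (sinTaylor 4) (π / 3) * 9 / (8 * π ^ 2) =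
      π ^ 2 / 18 - π ^ 4 / 2430 + π ^ 6 / 765450 - π ^ 8 / 434010150 := by
  rw [ballIntegral_sinTaylor]
  simp only [sum_range_succ, prod_range_succ, range_zero, sum_empty, prod_empty, factorial]
  field_simp
  ring

lemma pi_sq_mem_Ioo : π ^ 2 ∈ Set.Ioo 9.8696 9.8697 := by
  constructor <;> nlinarith [pi_gt_d6, pi_lt_d6]

lemma density_polynomial_bounds {t : ℝ} (ht₀ : 9.8696 < t) (ht₁ : t < 9.8697) :
    0.509 < t / 18 - t ^ 2 / 2430 + t ^ 3 / 765450 - t ^ 4 / 434010150 ∧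
      t / 18 - t ^ 2 / 2430 + t ^ 3 / 765450 < 0.510 := by
  have ht2 : 97.409 < t ^ 2 ∧ t ^ 2 < 97.411 := by constructor <;> nlinarith
  have ht3 : 961.3 < t ^ 3 ∧ t ^ 3 < 961.5 := by constructor <;> nlinarith
  have ht4 : t ^ 4 < 9489 := by nlinarith
  constructor <;> linarith

/-- The optimal packing density for the `S²×R` space group `1q.I.1` (attained at `q = 3`)
satisfies `0.509 < V(π/3)·9/(8π²) < 0.510` (the paper's value is `≈ 0.50946`). -/
theorem density_1qI1_bounds :
    0.509 < V (π / 3) * 9 / (8 * π ^ 2) ∧ V (π / 3) * 9 / (8 * π ^ 2) < 0.510 := by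
  have hr : 0 ≤ π / 3 := by positivity
  obtain ⟨hlow, hupp⟩ := density_polynomial_bounds pi_sq_mem_Ioo.1 pi_sq_mem_Ioo.2
  simp only [← pow_mul] at hlow hupp
  constructor
  · calc (0.509 : ℝ) < π ^ 2 / 18 - π ^ 4 / 2430 + π ^ 6 / 765450 - π ^ 8 / 434010150 := hlow
      _ = ballIntegral (sinTaylor (2 * 1 + 2)) (π / 3) * 9 / (8 * π ^ 2) :=
          ballIntegral_sinTaylor_four_pi_div_three.symm
      _ ≤ V (π / 3) * 9 / (8 * π ^ 2) := by gcongr; exact ballIntegral_sinTaylor_le_V 1 hr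
  · calc V (π / 3) * 9 / (8 * π ^ 2)
        ≤ ballIntegral (sinTaylor (2 * 1 + 1)) (π / 3) * 9 / (8 * π ^ 2) := by
          gcongr; exact V_le_ballIntegral_sinTaylor 1 hr
      _ = π ^ 2 / 18 - π ^ 4 / 2430 + π ^ 6 / 765450 := ballIntegral_sinTaylor_three_pi_div_three
      _ < 0.510 := hupp
end

section
/- Let K = (√((5+√5)/10), c, c) ∈ ℝ³ with c = (1/2)·√((√5−1)/√5), and let R = arccos(√((5+√5)/10)). Then K is a unit vector, ⟨K, σ(K)⟩ = 1/√5 where σ(x,y,z) = (x, −y, −z) is the half-turn about the x-axis, and cos(2R) = 1/√5; hence the spherical distance from K to σ(K) equals 2R, i.e. the optimal ball of radius R centred at K touches its image under the 2-fold rotation g₁ of the space group 8.I.1. -/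
/-!
For a unit vector `p` the half-turn about the `x`-axis gives `⟨p, σ p⟩ = 2 p₁² - 1`, which is
`cos (2 θ)` for the angle `θ = arccos p₁` between `p` and the axis; when `p₁ ≥ 0` this angle is
at most `π / 2`, so the spherical distance from `p` to `σ p` is exactly `2 θ`. For the kernel
point `K` one has `K₁² = (5 + √5) / 10` and `c² = (5 - √5) / 20`, so `K` is a unit vector and
`2 K₁² - 1 = √5 / 5 = 1 / √5`.
-/

open Real

/-- Euclidean dot product on `ℝ³ = ℝ × ℝ × ℝ`. -/
def dot (p q : ℝ × ℝ × ℝ) : ℝ := p.1 * q.1 + p.2.1 * q.2.1 + p.2.2 * q.2.2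

/-- The half-turn `g₁` about the `x`-axis. -/
def halfTurnX (p : ℝ × ℝ × ℝ) : ℝ × ℝ × ℝ := (p.1, -p.2.1, -p.2.2)

lemma dot_halfTurnX_self (p : ℝ × ℝ × ℝ) : dot p (halfTurnX p) = 2 * p.1 ^ 2 - dot p p := by
  simp only [dot, halfTurnX]
  ring

lemma Real.cos_two_mul_arccos {x : ℝ} (hx₀ : -1 ≤ x) (hx₁ : x ≤ 1) :
    cos (2 * arccos x) = 2 * x ^ 2 - 1 := by
  rw [cos_two_mul, cos_arccos hx₀ hx₁]

lemma Real.arccos_two_mul_sq_sub_one {x : ℝ} (hx₀ : 0 ≤ x) (hx₁ : x ≤ 1) :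
    arccos (2 * x ^ 2 - 1) = 2 * arccos x := by
  have h_le : arccos x ≤ π / 2 := arccos_le_pi_div_two.2 hx₀
  rw [← cos_two_mul_arccos (by linarith) hx₁,
    arccos_cos (by linarith [arccos_nonneg x]) (by linarith)]

lemma fst_le_one_of_dot_self_eq_one {p : ℝ × ℝ × ℝ} (hp : dot p p = 1) : p.1 ≤ 1 := by
  simp only [dot] at hp
  nlinarith [sq_nonneg p.2.1, sq_nonneg p.2.2, sq_nonneg (p.1 - 1)]

lemma arccos_dot_halfTurnX_self {p : ℝ × ℝ × ℝ} (hp : dot p p = 1) (hp₀ : 0 ≤ p.1) :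
    arccos (dot p (halfTurnX p)) = 2 * arccos p.1 := by
  rw [dot_halfTurnX_self, hp, arccos_two_mul_sq_sub_one hp₀ (fst_le_one_of_dot_self_eq_one hp)]

lemma sq_sqrt_five_add_sqrt_five_div_ten : √((5 + √5) / 10) ^ 2 = (5 + √5) / 10 :=
  sq_sqrt (by positivity)

lemma sq_half_mul_sqrt_sqrt_five_sub_one_div_sqrt_five :
    ((1 / 2) * √((√5 - 1) / √5)) ^ 2 = (5 - √5) / 20 := by
  have h5 : √5 ^ 2 = 5 := sq_sqrt (by norm_num)
  have hpos : 0 < √5 := by positivity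
  have h1 : 1 ≤ √5 := by nlinarith
  rw [mul_pow, sq_sqrt (div_nonneg (by linarith) hpos.le)]
  field_simp
  linear_combination 4 * h5

lemma one_div_sqrt_five : 1 / √5 = √5 / 5 := by
  have h5 : √5 ^ 2 = 5 := sq_sqrt (by norm_num)
  field_simp
  linear_combination -h5

/-- The optimal kernel point `K = (√((5+√5)/10), c, c)` with `c = (1/2)√((√5−1)/√5)` and
optimal radius `R = arccos √((5+√5)/10)` for the `S²×R` space group `8.I.1` satisfy:
`K` is a unit vector, `⟨K, σ(K)⟩ = 1/√5` for the half-turn `σ` about the `x`-axis,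
`cos(2R) = 1/√5`, and hence the spherical distance `arccos⟨K, σ(K)⟩` equals `2R`:
the optimal ball touches its image under `g₁`. -/
theorem optimal_ball_touches_halfTurn_image_8I1 :
    let K : ℝ × ℝ × ℝ :=
      (Real.sqrt ((5 + Real.sqrt 5) / 10),
       (1/2) * Real.sqrt ((Real.sqrt 5 - 1) / Real.sqrt 5),
       (1/2) * Real.sqrt ((Real.sqrt 5 - 1) / Real.sqrt 5))
    let R : ℝ := Real.arccos (Real.sqrt ((5 + Real.sqrt 5) / 10))
    dot K K = 1 ∧
    dot K (halfTurnX K) = 1 / Real.sqrt 5 ∧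
    Real.cos (2 * R) = 1 / Real.sqrt 5 ∧
    Real.arccos (dot K (halfTurnX K)) = 2 * R := by
  intro K R
  have hK₀ : 0 ≤ K.1 := sqrt_nonneg _
  have h_unit : dot K K = 1 := by
    simp only [K, dot, ← sq]
    linear_combination sq_sqrt_five_add_sqrt_five_div_ten +
      2 * sq_half_mul_sqrt_sqrt_five_sub_one_div_sqrt_five
  have h_cos : 2 * K.1 ^ 2 - 1 = 1 / √5 := by
    rw [sq_sqrt_five_add_sqrt_five_div_ten, one_div_sqrt_five]
    ring
  refine ⟨h_unit, ?_, ?_, arccos_dot_halfTurnX_self h_unit hK₀⟩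
  · rw [dot_halfTurnX_self, h_unit, h_cos]
  · rw [cos_two_mul_arccos (by linarith) (fst_le_one_of_dot_self_eq_one h_unit), h_cos]
end

section
/- Set R = arccos(√((5+√5)/10)). The optimal packing density of the S²×R space group 8.I.1, namely V(R) / ((π/3) · 2R), satisfies 0.600 < V(R) / ((2π/3)·R) < 0.601 (the paper's value is δ^{opt}(8.I.1) ≈ 0.6005). -/
/-!
Since `τ cos v ≥ 0` on the domain of integration, the Taylor bounds
`y - y³/6 ≤ sin y ≤ y - y³/6 + y⁵/120` (for `y ≥ 0`) can be integrated term by term, giving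
`2π (2/3 ρ³ - 2/45 ρ⁵) ≤ V ρ ≤ 2π (2/3 ρ³ - 2/45 ρ⁵ + 2/1575 ρ⁷)`.
Hence the density `V R / ((2π/3) R)` lies between `2R² - 2/15 R⁴` and
`2R² - 2/15 R⁴ + 2/525 R⁶`, and these are pushed past `0.600` and `0.601` by
`0.5535 < R < 0.5537`, which follows from Taylor bounds for `cos` at the two endpoints
since `cos R = √((5 + √5)/10)`.
-/

open Real

lemma le_of_deriv_le_on_Ici {f g : ℝ → ℝ} {a x : ℝ} (hf : Differentiable ℝ f)
    (hg : Differentiable ℝ g) (ha : f a ≤ g a) (h' : ∀ y, a ≤ y → deriv f y ≤ deriv g y)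
    (hx : a ≤ x) : f x ≤ g x := by
  have hmono : MonotoneOn (g - f) (Set.Ici a) :=
    monotoneOn_of_deriv_nonneg (convex_Ici a) (hg.sub hf).continuous.continuousOn
      (hg.sub hf).differentiableOn fun y hy => by
        rw [interior_Ici] at hy
        rw [deriv_sub (hg y) (hf y), sub_nonneg]
        exact h' y hy.le
  have := hmono Set.self_mem_Ici hx hx
  simp only [Pi.sub_apply] at this
  linarith

namespace Real

theorem cos_le_taylor_four (x : ℝ) : cos x ≤ 1 - x ^ 2 / 2 + x ^ 4 / 24 := by
  suffices h : ∀ y, 0 ≤ y → cos y ≤ 1 - y ^ 2 / 2 + y ^ 4 / 24 by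
    simpa [Even.pow_abs ⟨1, rfl⟩, Even.pow_abs ⟨2, rfl⟩] using h |x| (abs_nonneg x)
  intro y hy
  refine le_of_deriv_le_on_Ici (f := cos) (g := fun x => 1 - x ^ 2 / 2 + x ^ 4 / 24)
    (by fun_prop) (by fun_prop) (by simp) (fun z hz => ?_) hy
  simp (disch := fun_prop)
  nlinarith [sin_ge_sub_cube hz]

theorem sin_le_taylor_five {x : ℝ} (hx : 0 ≤ x) : sin x ≤ x - x ^ 3 / 6 + x ^ 5 / 120 := by
  refine le_of_deriv_le_on_Ici (f := sin) (g := fun x => x - x ^ 3 / 6 + x ^ 5 / 120)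
    (by fun_prop) (by fun_prop) (by simp) (fun y _ => ?_) hx
  simp (disch := fun_prop)
  linarith [cos_le_taylor_four y]

theorem taylor_six_le_cos (x : ℝ) : 1 - x ^ 2 / 2 + x ^ 4 / 24 - x ^ 6 / 720 ≤ cos x := by
  suffices h : ∀ y, 0 ≤ y → 1 - y ^ 2 / 2 + y ^ 4 / 24 - y ^ 6 / 720 ≤ cos y by
    simpa [Even.pow_abs ⟨1, rfl⟩, Even.pow_abs ⟨2, rfl⟩, Even.pow_abs ⟨3, rfl⟩] using
      h |x| (abs_nonneg x)
  intro y hy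
  refine le_of_deriv_le_on_Ici (f := fun x => 1 - x ^ 2 / 2 + x ^ 4 / 24 - x ^ 6 / 720) (g := cos)
    (by fun_prop) (by fun_prop) (by simp) (fun z hz => ?_) hy
  simp (disch := fun_prop)
  nlinarith [sin_le_taylor_five hz]

end Real

theorem integral_cos_pow_five_neg_pi_div_two_pi_div_two :
    ∫ v in -(π / 2)..π / 2, cos v ^ 5 = 16 / 15 := by
  rw [integral_cos_pow (n := 3)]
  norm_num

theorem continuous_integral_mul_sin_mul_cos (a b : ℝ) :
    Continuous fun τ : ℝ => ∫ v in a..b, τ * sin (τ * cos v) :=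
  intervalIntegral.continuous_parametric_intervalIntegral_of_continuous' (by fun_prop) a b

theorem integral_mul_sin_mul_cos_ge {τ : ℝ} (hτ : 0 ≤ τ) :
    2 * τ ^ 2 - 2 / 9 * τ ^ 4 ≤ ∫ v in -(π / 2)..π / 2, τ * sin (τ * cos v) := by
  calc 2 * τ ^ 2 - 2 / 9 * τ ^ 4
      = ∫ v in -(π / 2)..π / 2, τ * (τ * cos v - (τ * cos v) ^ 3 / 6) := by
        simp (disch := first | fun_prop | (apply Continuous.intervalIntegrable; fun_prop))
          [mul_sub, mul_pow, intervalIntegral.integral_sub]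
        ring
    _ ≤ _ := by
        refine intervalIntegral.integral_mono_on (by linarith [pi_pos])
          (Continuous.intervalIntegrable (by fun_prop) _ _)
          (Continuous.intervalIntegrable (by fun_prop) _ _) fun v hv => ?_
        exact mul_le_mul_of_nonneg_left
          (sin_ge_sub_cube (mul_nonneg hτ (cos_nonneg_of_mem_Icc hv))) hτ

theorem integral_mul_sin_mul_cos_le {τ : ℝ} (hτ : 0 ≤ τ) :
    ∫ v in -(π / 2)..π / 2, τ * sin (τ * cos v) ≤ 2 * τ ^ 2 - 2 / 9 * τ ^ 4 + 2 / 225 * τ ^ 6 := by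
  calc ∫ v in -(π / 2)..π / 2, τ * sin (τ * cos v)
      ≤ ∫ v in -(π / 2)..π / 2,
          τ * (τ * cos v - (τ * cos v) ^ 3 / 6 + (τ * cos v) ^ 5 / 120) := by
        refine intervalIntegral.integral_mono_on (by linarith [pi_pos])
          (Continuous.intervalIntegrable (by fun_prop) _ _)
          (Continuous.intervalIntegrable (by fun_prop) _ _) fun v hv => ?_
        exact mul_le_mul_of_nonneg_left
          (sin_le_taylor_five (mul_nonneg hτ (cos_nonneg_of_mem_Icc hv))) hτ
    _ = 2 * τ ^ 2 - 2 / 9 * τ ^ 4 + 2 / 225 * τ ^ 6 := by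
        simp (disch := first | fun_prop | (apply Continuous.intervalIntegrable; fun_prop))
          [mul_add, mul_sub, mul_pow, intervalIntegral.integral_add, intervalIntegral.integral_sub,
            integral_cos_pow_five_neg_pi_div_two_pi_div_two]
        ring

theorem le_V {ρ : ℝ} (hρ : 0 ≤ ρ) : 2 * π * (2 / 3 * ρ ^ 3 - 2 / 45 * ρ ^ 5) ≤ V ρ := by
  refine mul_le_mul_of_nonneg_left ?_ (by positivity)
  calc 2 / 3 * ρ ^ 3 - 2 / 45 * ρ ^ 5 = ∫ τ in (0 : ℝ)..ρ, (2 * τ ^ 2 - 2 / 9 * τ ^ 4) := by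
        simp (disch := first | fun_prop | (apply Continuous.intervalIntegrable; fun_prop))
          [intervalIntegral.integral_sub]
        ring
    _ ≤ _ := intervalIntegral.integral_mono_on hρ
        (Continuous.intervalIntegrable (by fun_prop) _ _)
        ((continuous_integral_mul_sin_mul_cos _ _).intervalIntegrable _ _)
        fun τ hτ => integral_mul_sin_mul_cos_ge hτ.1

theorem V_le {ρ : ℝ} (hρ : 0 ≤ ρ) :
    V ρ ≤ 2 * π * (2 / 3 * ρ ^ 3 - 2 / 45 * ρ ^ 5 + 2 / 1575 * ρ ^ 7) := by
  refine mul_le_mul_of_nonneg_left ?_ (by positivity)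
  calc _ ≤ ∫ τ in (0 : ℝ)..ρ, (2 * τ ^ 2 - 2 / 9 * τ ^ 4 + 2 / 225 * τ ^ 6) :=
        intervalIntegral.integral_mono_on hρ
          ((continuous_integral_mul_sin_mul_cos _ _).intervalIntegrable _ _)
          (Continuous.intervalIntegrable (by fun_prop) _ _)
          fun τ hτ => integral_mul_sin_mul_cos_le hτ.1
    _ = 2 / 3 * ρ ^ 3 - 2 / 45 * ρ ^ 5 + 2 / 1575 * ρ ^ 7 := by
        simp (disch := first | fun_prop | (apply Continuous.intervalIntegrable; fun_prop))
          [intervalIntegral.integral_add, intervalIntegral.integral_sub]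
        ring

theorem arccos_sqrt_five_add_sqrt_five_div_ten_mem :
    0.5535 < arccos √((5 + √5) / 10) ∧ arccos √((5 + √5) / 10) < 0.5537 := by
  have h5 : (2.236 : ℝ) < √5 ∧ √5 < 2.2361 :=
    ⟨(lt_sqrt (by norm_num)).2 (by norm_num), (sqrt_lt' (by norm_num)).2 (by norm_num)⟩
  constructor
  · rw [← arccos_cos (x := 0.5535) (by norm_num) (by linarith [pi_gt_three])]
    refine arccos_lt_arccos (by linarith [sqrt_nonneg ((5 + √5) / 10)]) ?_ (cos_le_one _)
    refine lt_of_lt_of_le ?_ (taylor_six_le_cos 0.5535)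
    rw [sqrt_lt' (by norm_num)]
    linarith
  · rw [← arccos_cos (x := 0.5537) (by norm_num) (by linarith [pi_gt_three])]
    refine arccos_lt_arccos (neg_one_le_cos _) ?_ (sqrt_le_one.2 (by linarith))
    refine lt_of_le_of_lt (cos_le_taylor_four 0.5537) ?_
    rw [lt_sqrt (by norm_num)]
    linarith

/-- With `R = arccos √((5+√5)/10)`, the optimal packing density of the `S²×R` space group
`8.I.1`, namely `V(R)` divided by the volume `(π/3)·2R` of the prism-shaped
Dirichlet–Voronoi cell, satisfies `0.600 < V(R)/((2π/3)·R) < 0.601`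
(the paper's value is `≈ 0.6005`). -/
theorem optimal_density_8I1_bounds :
    let R : ℝ := Real.arccos (Real.sqrt ((5 + Real.sqrt 5) / 10))
    0.600 < V R / ((2 * π / 3) * R) ∧ V R / ((2 * π / 3) * R) < 0.601 := by
  intro R
  obtain ⟨hR₁, hR₂⟩ : 0.5535 < R ∧ R < 0.5537 := arccos_sqrt_five_add_sqrt_five_div_ten_mem
  have hR : 0 < R := by linarith
  have hs₁ : 0.30636 < R ^ 2 := by nlinarith
  have hs₂ : R ^ 2 < 0.30659 := by nlinarith
  have hπR : 0 < π * R := mul_pos pi_pos hR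
  constructor
  · rw [lt_div_iff₀ (by positivity)]
    have hlower : 0.600 < 2 * R ^ 2 - 2 / 15 * R ^ 4 := by nlinarith
    nlinarith [le_V hR.le, mul_lt_mul_of_pos_left hlower hπR]
  · rw [div_lt_iff₀ (by positivity)]
    have hupper : 2 * R ^ 2 - 2 / 15 * R ^ 4 + 2 / 525 * R ^ 6 < 0.601 := by
      have h₄ : 0.30636 ^ 2 < (R ^ 2) ^ 2 := pow_lt_pow_left₀ hs₁ (by norm_num) two_ne_zero
      have h₆ : (R ^ 2) ^ 3 < 0.30659 ^ 3 := pow_lt_pow_left₀ hs₂ (by positivity) three_ne_zero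
      linarith
    nlinarith [V_le hR.le, mul_lt_mul_of_pos_left hupper hπR]
end
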